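/- arXiv:1408.2167 — 3 statements merged into one kernel-verified Lean document; each statement's English description precedes it below -/
import Mathlib

section
/- Let T be a nonempty tree. Then every subset of L(T) has a least upper bound and a greatest lower bound (i.e., L(T) is a complete lattice) if and only if T has no infinite path. -/
/-- `T` is a tree: a set of finite sequences of natural numbers closed under prefixes. -/
def IsTree (T : Set (List ℕ)) : Prop :=
  ∀ l ∈ T, ∀ l' : List ℕ, l' <+: l → l' ∈ T

/-- `f : ℕ → ℕ` is an infinite path of `T`: every initial segment
`[f 0, f 1, …, f (k-1)]` belongs to `T`. -/
def IsPath (T : Set (List ℕ)) (f : ℕ → ℕ) : Prop :=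
  ∀ k : ℕ, (List.range k).map f ∈ T

/-- An upper bound of `A` with respect to the relation `le`. -/
def RelUpperBound {X : Type*} (le : X → X → Prop) (A : Set X) (j : X) : Prop :=
  ∀ x ∈ A, le x j

/-- A lower bound of `A` with respect to the relation `le`. -/
def RelLowerBound {X : Type*} (le : X → X → Prop) (A : Set X) (m : X) : Prop :=
  ∀ x ∈ A, le m x

/-- `j` is a least upper bound of `A` with respect to the relation `le`. -/
def RelIsLUB {X : Type*} (le : X → X → Prop) (A : Set X) (j : X) : Prop :=
  RelUpperBound le A j ∧ ∀ k, RelUpperBound le A k → le j k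

/-- `m` is a greatest lower bound of `A` with respect to the relation `le`. -/
def RelIsGLB {X : Type*} (le : X → X → Prop) (A : Set X) (m : X) : Prop :=
  RelLowerBound le A m ∧ ∀ k, RelLowerBound le A k → le k m

/-- `c` is a compact element with respect to the relation `le`: whenever `c` is below
the supremum of a set `A`, it is below the supremum of some finite subset of `A`. -/
def RelIsCompact {X : Type*} (le : X → X → Prop) (c : X) : Prop :=
  ∀ (A : Set X) (j : X), RelIsLUB le A j → le c j →
    ∃ A' ⊆ A, A'.Finite ∧ ∃ j' : X, RelIsLUB le A' j' ∧ le c j'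

/-- The underlying type of `L(T)`: the disjoint union of two copies of `T`.
`Sum.inl σ` is the element `σ` of the first copy and `Sum.inr σ` is `σ*`. -/
abbrev LTree (T : Set (List ℕ)) : Type := {l : List ℕ // l ∈ T} ⊕ {l : List ℕ // l ∈ T}

/-- The order on `L(T)`: `σ ≤ τ` iff `σ` is a prefix of `τ`; `σ* ≤ τ*` iff `τ` is a
prefix of `σ`; `σ ≤ τ*` iff `σ` and `τ` are comparable; and never `σ* ≤ τ`. -/
def LTreeLe (T : Set (List ℕ)) : LTree T → LTree T → Prop
  | Sum.inl σ, Sum.inl τ => σ.1 <+: τ.1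
  | Sum.inl σ, Sum.inr τ => σ.1 <+: τ.1 ∨ τ.1 <+: σ.1
  | Sum.inr _, Sum.inl _ => False
  | Sum.inr σ, Sum.inr τ => τ.1 <+: σ.1

/-!
An infinite path `f` gives the chain of nodes `f↾n` in the first copy, which has no least upper
bound: an upper bound `ρ` in the first copy would be longer than every `f↾n`, and an upper bound
`ρ*` is never least, since `(f↾(|ρ|+1))*` is a strictly smaller one.

Conversely, without infinite paths every chain of nodes is bounded in length (an unbounded chain
spells out a path), hence has a longest element. If `A` lies in the first copy and is a chain, its
longest element (or `[]`) is its least upper bound. Otherwise every upper bound of `A` is some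
`ρ*` with `ρ` a prefix of one fixed node `b` (an element `b*` of `A`, or one of two incomparable
elements of `A`), and the least upper bound is `ρ*` for the longest such `ρ`. Greatest lower
bounds follow by the order-reversing involution `σ ↔ σ*`.
-/

theorem List.exists_longest_prefix {α : Type*} (b : List α) (Q : List α → Prop) (hQ : Q []) :
    ∃ ρ, ρ <+: b ∧ Q ρ ∧ ∀ ρ', ρ' <+: b → Q ρ' → ρ' <+: ρ := by
  classical
  let P : ℕ → Prop := fun n => Q (b.take n)
  have hP : P (Nat.findGreatest P b.length) :=
    Nat.findGreatest_spec (Nat.zero_le _) (by simpa [P] using hQ)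
  refine ⟨_, List.take_prefix _ b, hP, fun ρ' hρ' hQρ' => ?_⟩
  have hlen : ρ'.length ≤ Nat.findGreatest P b.length :=
    Nat.le_findGreatest hρ'.length_le
      (show Q (b.take ρ'.length) by rwa [← List.prefix_iff_eq_take.mp hρ'])
  exact List.prefix_of_prefix_length_le hρ' (List.take_prefix _ b)
    (by simpa [hρ'.length_le] using hlen)

theorem List.map_range_prefix_of_le {α : Type*} (f : ℕ → α) {k n : ℕ} (h : k ≤ n) :
    (List.range k).map f <+: (List.range n).map f := by
  have : (List.range k).map f = ((List.range n).map f).take k := by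
    rw [← List.map_take, List.take_range, min_eq_left h]
  exact this ▸ List.take_prefix _ _

theorem IsChain.exists_isPath_of_not_bddAbove_length {T : Set (List ℕ)} (hT : IsTree T)
    {S : Set (List ℕ)} (hST : S ⊆ T) (hS : IsChain (· <+: ·) S)
    (hunb : ¬ BddAbove (List.length '' S)) : ∃ f, IsPath T f := by
  have hlong : ∀ n, ∃ l ∈ S, n < l.length := by simpa [not_bddAbove_iff] using hunb
  choose g hgS hglen using hlong
  refine ⟨fun n => (g n)[n]'(hglen n), fun k => ?_⟩
  have hseg : (List.range k).map (fun n => (g n)[n]'(hglen n)) = (g k).take k := by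
    refine List.ext_getElem (by simpa using (hglen k).le) fun i hi _ => ?_
    have hik : i < k := by simpa using hi
    simp only [List.getElem_map, List.getElem_range, List.getElem_take]
    rcases hS.total (hgS i) (hgS k) with h | h
    · exact h.getElem (hglen i)
    · exact (h.getElem (hik.trans (hglen k))).symm
  exact hseg ▸ hT _ (hST (hgS k)) _ (List.take_prefix k _)

theorem IsChain.exists_forall_prefix_of_bddAbove_length {α : Type*} {S : Set (List α)}
    (hS : IsChain (· <+: ·) S) (hne : S.Nonempty) (hbdd : BddAbove (List.length '' S)) :
    ∃ σ ∈ S, ∀ τ ∈ S, τ <+: σ := by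
  obtain ⟨σ, hσ, hσlen⟩ := Nat.sSup_mem (hne.image _) hbdd
  refine ⟨σ, hσ, fun τ hτ => ?_⟩
  have hlen : τ.length ≤ σ.length := hσlen ▸ le_csSup hbdd (Set.mem_image_of_mem _ hτ)
  rcases hS.total hτ hσ with h | h
  · exact h
  · exact List.prefix_of_prefix_length_le List.prefix_rfl h hlen

theorem List.prefix_of_comparable_of_incomparable {α : Type*} {ρ τ₁ τ₂ : List α}
    (h₁ : τ₁ <+: ρ ∨ ρ <+: τ₁) (h₂ : τ₂ <+: ρ ∨ ρ <+: τ₂) (h : ¬ (τ₁ <+: τ₂ ∨ τ₂ <+: τ₁)) :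
    ρ <+: τ₁ := by
  refine h₁.resolve_left fun h₁ => h ?_
  rcases h₂ with h₂ | h₂
  · exact List.prefix_or_prefix_of_prefix h₁ h₂
  · exact Or.inl (h₁.trans h₂)

theorem RelIsLUB.relIsGLB_image {X Y : Type*} {le : X → X → Prop} {le' : Y → Y → Prop}
    (e : X ≃ Y) (he : ∀ x y, le' (e x) (e y) ↔ le y x) {A : Set X} {j : X}
    (h : RelIsLUB le A j) : RelIsGLB le' (e '' A) (e j) := by
  refine ⟨?_, fun k hk => ?_⟩
  · rintro _ ⟨x, hx, rfl⟩
    exact (he j x).mpr (h.1 x hx)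
  · have hub : RelUpperBound le A (e.symm k) := fun x hx =>
      (he _ x).mp (by simpa using hk _ (Set.mem_image_of_mem e hx))
    simpa using (he (e.symm k) j).mpr (h.2 _ hub)

section

variable {T : Set (List ℕ)}

theorem LTreeLe_inl_nil (hne : [] ∈ T) (x : LTree T) : LTreeLe T (Sum.inl ⟨[], hne⟩) x := by
  rcases x with τ | τ
  exacts [List.nil_prefix, Or.inl List.nil_prefix]

theorem LTreeLe_inr_nil (hne : [] ∈ T) (x : LTree T) : LTreeLe T x (Sum.inr ⟨[], hne⟩) := by
  rcases x with τ | τ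
  exacts [Or.inr List.nil_prefix, List.nil_prefix]

theorem LTreeLe_swap (x y : LTree T) : LTreeLe T x.swap y.swap ↔ LTreeLe T y x := by
  rcases x with σ | σ <;> rcases y with τ | τ <;> simp [LTreeLe, or_comm]

theorem RelUpperBound.exists_eq_inr_prefix_of_inr_mem {A : Set (LTree T)} {k : LTree T}
    (hk : RelUpperBound (LTreeLe T) A k) {τ : {l // l ∈ T}} (hτ : Sum.inr τ ∈ A) :
    ∃ ρ : {l // l ∈ T}, k = Sum.inr ρ ∧ ρ.1 <+: τ.1 := by
  rcases k with ρ | ρ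
  · exact (hk _ hτ).elim
  · exact ⟨ρ, rfl, hk _ hτ⟩

theorem RelUpperBound.exists_eq_inr_prefix_of_incomparable {A : Set (LTree T)} {k : LTree T}
    (hk : RelUpperBound (LTreeLe T) A k) {τ₁ τ₂ : {l // l ∈ T}} (h₁ : Sum.inl τ₁ ∈ A)
    (h₂ : Sum.inl τ₂ ∈ A) (hinc : ¬ (τ₁.1 <+: τ₂.1 ∨ τ₂.1 <+: τ₁.1)) :
    ∃ ρ : {l // l ∈ T}, k = Sum.inr ρ ∧ ρ.1 <+: τ₁.1 := by
  rcases k with ρ | ρ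
  · exact (hinc (List.prefix_or_prefix_of_prefix (hk _ h₁) (hk _ h₂))).elim
  · exact ⟨ρ, rfl, List.prefix_of_comparable_of_incomparable (hk _ h₁) (hk _ h₂) hinc⟩

namespace LTree

theorem exists_relIsLUB_of_upperBounds_prefix (hne : [] ∈ T) {A : Set (LTree T)} (b : List ℕ)
    (hb : ∀ k, RelUpperBound (LTreeLe T) A k → ∃ ρ : {l // l ∈ T}, k = Sum.inr ρ ∧ ρ.1 <+: b) :
    ∃ j, RelIsLUB (LTreeLe T) A j := by
  obtain ⟨ρ, -, ⟨hρT, hρub⟩, hρmax⟩ := List.exists_longest_prefix b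
    (fun ρ => ∃ h : ρ ∈ T, RelUpperBound (LTreeLe T) A (Sum.inr ⟨ρ, h⟩))
    ⟨hne, fun x _ => LTreeLe_inr_nil hne x⟩
  refine ⟨Sum.inr ⟨ρ, hρT⟩, hρub, fun k hk => ?_⟩
  obtain ⟨ρ', rfl, hρ'b⟩ := hb k hk
  exact hρmax ρ'.1 hρ'b ⟨ρ'.2, hk⟩

theorem exists_relIsLUB_of_isChain (hT : IsTree T) (hne : [] ∈ T)
    (hnp : ¬ ∃ f, IsPath T f) {A : Set (LTree T)} (hr : ∀ τ, Sum.inr τ ∉ A)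
    (hc : IsChain (· <+: ·) (Subtype.val '' (Sum.inl ⁻¹' A))) :
    ∃ j, RelIsLUB (LTreeLe T) A j := by
  set S := insert [] (Subtype.val '' (Sum.inl ⁻¹' A))
  have hST : S ⊆ T := by
    rintro _ (rfl | ⟨σ, -, rfl⟩)
    exacts [hne, σ.2]
  have hSc : IsChain (· <+: ·) S := hc.insert fun _ _ _ => Or.inl List.nil_prefix
  have hbdd : BddAbove (List.length '' S) :=
    by_contra fun h => hnp (hSc.exists_isPath_of_not_bddAbove_length hT hST h)
  obtain ⟨σ, hσS, hmax⟩ :=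
    hSc.exists_forall_prefix_of_bddAbove_length (Set.insert_nonempty _ _) hbdd
  refine ⟨Sum.inl ⟨σ, hST hσS⟩, ?_, fun k hk => ?_⟩
  · rintro (τ | τ) hτ
    · exact hmax τ.1 (Set.mem_insert_of_mem _ ⟨τ, hτ, rfl⟩)
    · exact (hr τ hτ).elim
  · rcases hσS with rfl | ⟨σ', hσ', rfl⟩
    · exact LTreeLe_inl_nil hne k
    · exact hk _ hσ'

theorem exists_relIsLUB (hT : IsTree T) (hne : [] ∈ T) (hnp : ¬ ∃ f, IsPath T f)
    (A : Set (LTree T)) : ∃ j, RelIsLUB (LTreeLe T) A j := by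
  by_cases hr : ∃ τ, Sum.inr τ ∈ A
  · obtain ⟨τ, hτ⟩ := hr
    exact exists_relIsLUB_of_upperBounds_prefix hne τ.1 fun k hk =>
      hk.exists_eq_inr_prefix_of_inr_mem hτ
  rw [not_exists] at hr
  by_cases hc : IsChain (· <+: ·) (Subtype.val '' (Sum.inl ⁻¹' A))
  · exact exists_relIsLUB_of_isChain hT hne hnp hr hc
  obtain ⟨_, ⟨τ₁, hτ₁, rfl⟩, _, ⟨τ₂, hτ₂, rfl⟩, -, hinc⟩ := by
    simpa only [IsChain, Set.Pairwise, not_forall, exists_prop] using hc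
  exact exists_relIsLUB_of_upperBounds_prefix hne τ₁.1 fun k hk =>
    hk.exists_eq_inr_prefix_of_incomparable hτ₁ hτ₂ hinc

theorem exists_relIsGLB (hT : IsTree T) (hne : [] ∈ T) (hnp : ¬ ∃ f, IsPath T f)
    (A : Set (LTree T)) : ∃ m, RelIsGLB (LTreeLe T) A m := by
  let e : LTree T ≃ LTree T := Equiv.sumComm _ _
  obtain ⟨j, hj⟩ := exists_relIsLUB hT hne hnp (e.symm '' A)
  exact ⟨e j, by simpa only [e.image_symm_image] using hj.relIsGLB_image e LTreeLe_swap⟩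

theorem not_exists_relIsLUB_of_isPath {f : ℕ → ℕ} (hf : IsPath T f) :
    ¬ ∃ j, RelIsLUB (LTreeLe T)
      (Set.range fun n => (Sum.inl ⟨(List.range n).map f, hf n⟩ : LTree T)) j := by
  rintro ⟨j, hjub, hjleast⟩
  rcases j with ρ | ρ
  · have := (hjub _ ⟨ρ.1.length + 1, rfl⟩).length_le
    simp at this
  · have hub (k : ℕ) : LTreeLe T (Sum.inl ⟨_, hf k⟩) (Sum.inr ⟨_, hf (ρ.1.length + 1)⟩) := by
      rcases le_total k (ρ.1.length + 1) with h | h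
      exacts [Or.inl (List.map_range_prefix_of_le f h), Or.inr (List.map_range_prefix_of_le f h)]
    have := (hjleast (Sum.inr ⟨_, hf (ρ.1.length + 1)⟩) fun _ ⟨k, hk⟩ => hk ▸ hub k).length_le
    simp at this

end LTree

end

/-- `L(T)` is a complete lattice (every subset has a least upper bound and a greatest
lower bound) if and only if `T` has no infinite path. -/
theorem LTree_complete_iff_no_path (T : Set (List ℕ)) (hT : IsTree T) (hne : [] ∈ T) :
    (∀ A : Set (LTree T),
        (∃ j, RelIsLUB (LTreeLe T) A j) ∧ (∃ m, RelIsGLB (LTreeLe T) A m)) ↔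
      ¬ ∃ f : ℕ → ℕ, IsPath T f :=
  ⟨fun hcomp ⟨_, hf⟩ => LTree.not_exists_relIsLUB_of_isPath hf (hcomp _).1,
    fun hnp A => ⟨LTree.exists_relIsLUB hT hne hnp A, LTree.exists_relIsGLB hT hne hnp A⟩⟩
end

section
/- Let (T_n)_{n ∈ ℕ} be a family of nonempty trees and let L be the complete lattice built from this family. For each n, the element a_n is a compact element of L if and only if T_n has no infinite path. -/
/-- The underlying type of the lattice `L` built from a family of trees `(T n)`:
a least element `bot`, a greatest element `top`, an element `a n` for each `n`,
and an element `node n σ` for each `n` and `σ ∈ T n`. -/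
inductive BigL (T : ℕ → Set (List ℕ)) : Type
  | bot : BigL T
  | top : BigL T
  | a (n : ℕ) : BigL T
  | node (n : ℕ) (σ : {l : List ℕ // l ∈ T n}) : BigL T

/-- The order on `BigL T`: `bot ≤ x ≤ top` for all `x`; `node n σ ≤ node m τ` iff
`n = m` and `σ` is a prefix of `τ`; `node n σ ≤ a m` iff `n = m`; and no other
inequalities hold. -/
def BigLe {T : ℕ → Set (List ℕ)} : BigL T → BigL T → Prop
  | BigL.bot, _ => True
  | _, BigL.top => True
  | BigL.a n, BigL.a m => n = m
  | BigL.node n σ, BigL.node m τ => n = m ∧ σ.1 <+: τ.1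
  | BigL.node n _, BigL.a m => n = m
  | _, _ => False

/-!
If `f` is a path of `T n`, the nodes `(n, [f 0, …, f (k-1)])` form a chain with supremum `a n`,
and every finite part of it is bounded by one of these nodes, which lies strictly below `a n`.

Conversely, let `a n ≤ sup A`. If `sup A = ⊤`, then `⊤ ∈ A` or two elements of `A` lie below
different atoms `a p`, and their supremum is already `⊤`. If `sup A = a n`, then `a n ∈ A`, or two
incomparable nodes of `A` have supremum `a n`, or the nodes of `A` form a chain in `T n`. A chain
with no greatest element has unbounded lengths and so spells out a path of `T n`; a greatest node
(or `⊥`, if there is no node) would be an upper bound of `A` below `a n`.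
-/

theorem Monotone.exists_mem_upperBounds_of_finite_subset_range {α : Type*} [Preorder α]
    {g : ℕ → α} (hg : Monotone g) {A : Set α} (hA : A.Finite) (hAg : A ⊆ Set.range g) :
    ∃ K, g K ∈ upperBounds A := by
  obtain ⟨t, -, ht, rfl⟩ := Set.exists_subset_image_finite_and.1
    ⟨A, by rwa [Set.image_univ], hA, rfl⟩
  obtain ⟨K, hK⟩ := ht.bddAbove
  exact ⟨K, Set.forall_mem_image.2 fun k hk => hg (hK hk)⟩

theorem IsTree.exists_isPath_of_isChain {T S : Set (List ℕ)} (hT : IsTree T) (hST : S ⊆ T)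
    (hS : IsChain (· <+: ·) S) (hlen : ∀ N, ∃ σ ∈ S, N ≤ σ.length) :
    ∃ f, IsPath T f := by
  choose g hgS hglen using hlen
  -- `g (k + 1)` has a `k`-th entry, and any two `g N` agree wherever both are defined
  refine ⟨fun k => (g (k + 1)).getD k 0, fun k => ?_⟩
  suffices (List.range k).map (fun k => (g (k + 1)).getD k 0) = (g k).take k from
    this ▸ hT _ (hST (hgS k)) _ (List.take_prefix _ _)
  refine List.ext_getElem (by simp [hglen k]) fun i hik _ => ?_
  have hik : i < k := by simpa using hik
  have hi : i < (g (i + 1)).length := hglen (i + 1)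
  simp only [List.getElem_map, List.getElem_range, List.getElem_take,
    List.getD_eq_getElem _ _ hi]
  rcases hS.total (hgS (i + 1)) (hgS k) with h | h
  · exact h.getElem hi
  · exact (h.getElem (hik.trans_le (hglen k))).symm

theorem IsTree.exists_greatest_of_isChain {T S : Set (List ℕ)} (hT : IsTree T) (hST : S ⊆ T)
    (hS : IsChain (· <+: ·) S) (hne : S.Nonempty) (hpath : ¬ ∃ f, IsPath T f) :
    ∃ σ ∈ S, ∀ τ ∈ S, τ <+: σ := by
  have hbdd : BddAbove (List.length '' S) := by
    by_contra h
    refine hpath (hT.exists_isPath_of_isChain hST hS fun N => ?_)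
    obtain ⟨_, ⟨σ, hσ, rfl⟩, hNσ⟩ := not_bddAbove_iff.1 h N
    exact ⟨σ, hσ, hNσ.le⟩
  obtain ⟨σ, hσ, hσmax⟩ := Nat.sSup_mem (hne.image _) hbdd
  refine ⟨σ, hσ, fun τ hτ => ?_⟩
  have hτσ : τ.length ≤ σ.length := hσmax ▸ le_csSup hbdd ⟨τ, hτ, rfl⟩
  rcases hS.total hτ hσ with h | h
  · exact h
  · exact h.eq_of_length_le hτσ ▸ List.prefix_refl _

namespace BigL

variable {T : ℕ → Set (List ℕ)}

instance : PartialOrder (BigL T) where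
  le := BigLe
  le_refl x := by cases x <;> simp [BigLe]
  le_trans x y z := by
    cases x <;> cases y <;> cases z <;> simp +contextual [BigLe]
    exact fun _ hxy _ hyz => hxy.trans hyz
  le_antisymm x y := by
    cases x <;> cases y <;> simp +contextual [BigLe]
    rintro rfl hxy hyx
    exact heq_of_eq (Subtype.ext (hxy.eq_of_length_le hyx.length_le))

instance : OrderBot (BigL T) where
  bot := bot
  bot_le _ := trivial

instance : OrderTop (BigL T) where
  top := top
  le_top x := by cases x <;> trivial

theorem le_iff_bigLe {x y : BigL T} : x ≤ y ↔ BigLe x y := Iff.rfl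

@[simp] theorem node_le_a {n m : ℕ} {σ : {l // l ∈ T n}} : node n σ ≤ a m ↔ n = m := Iff.rfl

theorem not_a_le_node {n m : ℕ} {σ : {l // l ∈ T m}} : ¬ a n ≤ node m σ := id

theorem not_top_le_a {n : ℕ} : ¬ (⊤ : BigL T) ≤ a n := id

theorem exists_le_a {x : BigL T} (hbot : x ≠ ⊥) (htop : x ≠ ⊤) : ∃ p, x ≤ a p := by
  cases x with
  | bot => exact absurd rfl hbot
  | top => exact absurd rfl htop
  | a p => exact ⟨p, le_rfl⟩
  | node p σ => exact ⟨p, node_le_a.2 rfl⟩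

theorem le_a_or_eq_top_of_le {x u : BigL T} {p : ℕ} (hxp : x ≤ a p) (hx : x ≠ ⊥)
    (hxu : x ≤ u) : u ≤ a p ∨ u = ⊤ := by
  cases x <;> cases u <;>
    first | exact absurd rfl hx | exact .inr rfl | simp_all [le_iff_bigLe, BigLe]

theorem isLUB_pair_top {x y : BigL T} {p : ℕ} (hxp : x ≤ a p) (hx : x ≠ ⊥) (hyp : ¬ y ≤ a p) :
    IsLUB {x, y} ⊤ := by
  refine ⟨fun _ _ => le_top, fun u hu => ?_⟩
  have hyu : y ≤ u := hu (by simp)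
  obtain rfl := (le_a_or_eq_top_of_le hxp hx (hu (by simp))).resolve_left fun h => hyp (hyu.trans h)
  exact le_rfl

theorem isLUB_pair_node {n : ℕ} {σ τ : {l // l ∈ T n}} (hστ : ¬ σ.1 <+: τ.1)
    (hτσ : ¬ τ.1 <+: σ.1) : IsLUB {node n σ, node n τ} (a n) := by
  refine ⟨by rintro _ (rfl | rfl) <;> exact node_le_a.2 rfl, fun u hu => ?_⟩
  have hσu : node n σ ≤ u := hu (by simp)
  have hτu : node n τ ≤ u := hu (by simp)
  cases u with
  | bot => exact hσu.elim
  | top => exact le_top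
  | a m => exact hσu
  | node m ρ => exact (List.prefix_or_prefix_of_prefix hσu.2 hτu.2).elim hστ hτσ |>.elim

def pathNode (n : ℕ) {f : ℕ → ℕ} (hf : IsPath (T n) f) (k : ℕ) : BigL T :=
  node n ⟨(List.range k).map f, hf k⟩

theorem pathNode_mono {n : ℕ} {f : ℕ → ℕ} (hf : IsPath (T n) f) : Monotone (pathNode n hf) :=
  fun k k' hkk' => ⟨rfl, by
    simpa [List.take_range, Nat.min_eq_left hkk'] using ((List.range k').take_prefix k).map f⟩

theorem isLUB_range_pathNode {n : ℕ} {f : ℕ → ℕ} (hf : IsPath (T n) f) :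
    IsLUB (Set.range (pathNode n hf)) (a n) := by
  refine ⟨by rintro _ ⟨k, rfl⟩; exact node_le_a.2 rfl, fun u hu => ?_⟩
  have h0u : pathNode n hf 0 ≤ u := hu (Set.mem_range_self 0)
  cases u with
  | bot => exact h0u.elim
  | top => exact le_top
  | a m => exact h0u
  | node m τ => exact absurd (hu ⟨τ.1.length + 1, rfl⟩).2.length_le (by simp)

theorem not_relIsCompact_a_of_isPath {n : ℕ} {f : ℕ → ℕ} (hf : IsPath (T n) f) :
    ¬ RelIsCompact BigLe (a n : BigL T) := by
  intro hc
  obtain ⟨A', hA', hfin, j', hj', hnj'⟩ := hc _ _ (isLUB_range_pathNode hf)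
    (le_rfl : (a n : BigL T) ≤ a n)
  obtain ⟨K, hK⟩ := (pathNode_mono hf).exists_mem_upperBounds_of_finite_subset_range hfin hA'
  exact not_a_le_node (le_trans hnj' (hj'.2 _ hK))

theorem exists_finite_isLUB_top {A : Set (BigL T)} (hA : IsLUB A ⊤) :
    ∃ A' ⊆ A, A'.Finite ∧ IsLUB A' ⊤ := by
  by_cases htop : ⊤ ∈ A
  · exact ⟨{⊤}, Set.singleton_subset_iff.2 htop, Set.finite_singleton _, isLUB_singleton⟩
  obtain ⟨x, hxA, hx⟩ : ∃ x ∈ A, x ≠ ⊥ := by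
    by_contra! h
    exact absurd (hA.2 fun x hx => (h x hx).le) (by simp)
  obtain ⟨p, hxp⟩ := exists_le_a hx (ne_of_mem_of_not_mem hxA htop)
  obtain ⟨y, hyA, hyp⟩ : ∃ y ∈ A, ¬ y ≤ a p := by
    by_contra! h
    exact not_top_le_a (hA.2 h)
  exact ⟨{x, y}, Set.pair_subset hxA hyA, Set.toFinite _, isLUB_pair_top hxp hx hyp⟩

theorem mem_upperBounds_of_forall_node_le {n : ℕ} {A : Set (BigL T)} (hA : a n ∈ upperBounds A)
    (han : a n ∉ A) {u : BigL T} (hu : ∀ σ, node n σ ∈ A → node n σ ≤ u) : u ∈ upperBounds A := by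
  intro x hx
  have hxn : x ≤ a n := hA hx
  cases x with
  | bot => exact bot_le
  | top => exact (not_top_le_a hxn).elim
  | a m =>
    obtain rfl : m = n := hxn
    exact absurd hx han
  | node m σ =>
    obtain rfl : m = n := hxn
    exact hu σ hx

theorem exists_finite_isLUB_a {n : ℕ} (hT : IsTree (T n)) (hpath : ¬ ∃ f, IsPath (T n) f)
    {A : Set (BigL T)} (hA : IsLUB A (a n)) : ∃ A' ⊆ A, A'.Finite ∧ IsLUB A' (a n) := by
  by_cases han : a n ∈ A
  · exact ⟨{a n}, Set.singleton_subset_iff.2 han, Set.finite_singleton _, isLUB_singleton⟩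
  set S : Set (List ℕ) := {σ | ∃ h : σ ∈ T n, node n ⟨σ, h⟩ ∈ A}
  have hST : S ⊆ T n := fun σ hσ => hσ.1
  by_cases hS : IsChain (· <+: ·) S
  · exfalso
    have hub {u : BigL T} (hu : ∀ σ (h : σ ∈ S), node n ⟨σ, hST h⟩ ≤ u) : u ∈ upperBounds A :=
      mem_upperBounds_of_forall_node_le hA.1 han fun σ hσ => hu σ ⟨σ.2, hσ⟩
    rcases S.eq_empty_or_nonempty with hS0 | hS0
    · have hbot : ⊥ ∈ upperBounds A :=
        hub fun σ h => (Set.eq_empty_iff_forall_notMem.1 hS0 σ h).elim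
      exact absurd (hA.2 hbot) (by simp)
    · obtain ⟨σ, hσS, hσ⟩ := hT.exists_greatest_of_isChain hST hS hS0 hpath
      exact not_a_le_node (hA.2 (hub fun τ hτ => ⟨rfl, hσ τ hτ⟩ : node n ⟨σ, hST hσS⟩ ∈ _))
  · simp only [IsChain, Set.Pairwise, not_forall, not_or] at hS
    obtain ⟨σ, ⟨hσT, hσA⟩, τ, ⟨hτT, hτA⟩, -, hστ, hτσ⟩ := hS
    exact ⟨_, Set.pair_subset hσA hτA, Set.toFinite _,
      isLUB_pair_node (σ := ⟨σ, hσT⟩) (τ := ⟨τ, hτT⟩) hστ hτσ⟩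

theorem exists_finite_isLUB_of_a_le {n : ℕ} (hT : IsTree (T n))
    (hpath : ¬ ∃ f, IsPath (T n) f) {A : Set (BigL T)} {j : BigL T} (hA : IsLUB A j)
    (hnj : a n ≤ j) : ∃ A' ⊆ A, A'.Finite ∧ IsLUB A' j := by
  cases j with
  | top => exact exists_finite_isLUB_top hA
  | a m =>
    obtain rfl : n = m := hnj
    exact exists_finite_isLUB_a hT hpath hA
  | bot | node => exact hnj.elim

end BigL

theorem BigL_a_compact_iff_no_path_general (T : ℕ → Set (List ℕ))
    (hT : ∀ n, IsTree (T n)) (n : ℕ) :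
    RelIsCompact (BigLe (T := T)) (BigL.a n) ↔ ¬ ∃ f : ℕ → ℕ, IsPath (T n) f := by
  refine ⟨fun hc ⟨f, hf⟩ => BigL.not_relIsCompact_a_of_isPath hf hc, fun hpath A j hj hnj => ?_⟩
  obtain ⟨A', hA', hfin, hA'j⟩ := BigL.exists_finite_isLUB_of_a_le (hT n) hpath hj hnj
  exact ⟨A', hA', hfin, j, hA'j, hnj⟩

/-- In the complete lattice `L` built from a family of nonempty trees `(T n)`,
the element `a n` is compact if and only if `T n` has no infinite path. -/
theorem BigL_a_compact_iff_no_path (T : ℕ → Set (List ℕ))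
    (hT : ∀ n, IsTree (T n)) (hne : ∀ n, [] ∈ T n) (n : ℕ) :
    RelIsCompact (BigLe (T := T)) (BigL.a n) ↔ ¬ ∃ f : ℕ → ℕ, IsPath (T n) f :=
  BigL_a_compact_iff_no_path_general T hT n
end

section
/- Let T be a nonempty tree and consider the complete lattice T[a]. The element a is a compact element of T[a] if and only if T has no infinite path. -/
/-- The underlying type of the lattice `T[a]`: the elements of `T` together with
three additional elements `0`, `a`, `1`. -/
inductive TreeA (T : Set (List ℕ)) : Type
  | bot : TreeA T
  | top : TreeA T
  | a : TreeA T
  | node (σ : {l : List ℕ // l ∈ T}) : TreeA T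

/-- The order on `T[a]`: `bot` is least, `top` is greatest, `node σ ≤ node τ` iff
`σ` is a prefix of `τ`, and `a` is incomparable with every element of `T`. -/
def TreeALe {T : Set (List ℕ)} : TreeA T → TreeA T → Prop
  | TreeA.bot, _ => True
  | _, TreeA.top => True
  | TreeA.a, TreeA.a => True
  | TreeA.node σ, TreeA.node τ => σ.1 <+: τ.1
  | _, _ => False

/-!
If `f` is an infinite path, its initial segments have supremum `1` in `T[a]`, yet finitely many
of them all lie below a longer one, so no finite subset has a supremum above `a`.

Conversely, `a ≤ sup A` forces `sup A ∈ {a, 1}`. If `sup A = a` then `A ⊆ {0, a}` is finite. If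
`sup A = 1` and no finite subset has supremum `1`, then `1 ∉ A`, `a` and a node never occur
together in `A`, and the nodes of `A` form a prefix chain (pairs `{a, σ}` and incomparable pairs
`{σ, τ}` have supremum `1`). Without infinite paths the chain has bounded lengths, hence a
largest element; that node, or `a` when `A` has no nodes, is an upper bound of `A` below `1`.
-/

lemma List.map_range_prefix_map_range (f : ℕ → ℕ) {m n : ℕ} (h : m ≤ n) :
    (List.range m).map f <+: (List.range n).map f := by
  rw [← min_eq_left h, ← List.take_range, List.map_take]
  exact List.take_prefix _ _

section PrefixChain

variable {T : Set (List ℕ)} {S : Set (List ℕ)}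

/-- The `n`-th value of the path is read off any element of the chain longer than `n`;
comparability makes the choice irrelevant. -/
lemma exists_isPath_of_isChain_of_unbounded (hT : IsTree T) (hST : S ⊆ T)
    (hS : IsChain (· <+: ·) S) (hunb : ∀ K : ℕ, ∃ l ∈ S, K ≤ l.length) :
    ∃ f : ℕ → ℕ, IsPath T f := by
  choose L hLS hLlen using hunb
  refine ⟨fun n => (L (n + 1)).getD n 0, fun k => ?_⟩
  have hinit : (List.range k).map (fun n => (L (n + 1)).getD n 0) = (L k).take k := by
    apply List.ext_getElem
    · simp [min_eq_left (hLlen k)]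
    · intro i hik _
      simp only [List.length_map, List.length_range] at hik
      simp only [List.getElem_map, List.getElem_range, List.getElem_take]
      have hi : i < (L (i + 1)).length := hLlen (i + 1)
      rw [List.getD_eq_getElem _ _ hi]
      rcases hS.total (hLS (i + 1)) (hLS k) with h | h
      · exact h.getElem hi
      · exact (h.getElem (hik.trans_le (hLlen k))).symm
  rw [hinit]
  exact hT _ (hST (hLS k)) _ (List.take_prefix _ _)

lemma exists_max_of_isChain (hT : IsTree T) (hnp : ¬ ∃ f : ℕ → ℕ, IsPath T f) (hST : S ⊆ T)
    (hS : IsChain (· <+: ·) S) (hne : S.Nonempty) : ∃ m ∈ S, ∀ l ∈ S, l <+: m := by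
  have hbdd : BddAbove (List.length '' S) := by
    by_contra hunb
    refine hnp (exists_isPath_of_isChain_of_unbounded hT hST hS fun K => ?_)
    obtain ⟨_, ⟨l, hl, rfl⟩, hK⟩ := not_bddAbove_iff.1 hunb K
    exact ⟨l, hl, hK.le⟩
  obtain ⟨m, hm, hlen⟩ := Nat.sSup_mem (hne.image _) hbdd
  refine ⟨m, hm, fun l hl => ?_⟩
  rcases hS.total hl hm with h | h
  · exact h
  · have : l.length ≤ m.length := hlen ▸ le_csSup hbdd ⟨l, hl, rfl⟩
    rw [h.eq_of_length (le_antisymm h.length_le this)]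

end PrefixChain

namespace TreeA

variable {T : Set (List ℕ)}

lemma le_trans {x y z : TreeA T} (hxy : TreeALe x y) (hyz : TreeALe y z) : TreeALe x z := by
  cases x <;> cases y <;> cases z <;> simp_all [TreeALe]
  exact List.IsPrefix.trans hxy hyz

lemma top_le_iff {x : TreeA T} : TreeALe top x ↔ x = top := by
  cases x <;> simp [TreeALe]

lemma a_le_iff {x : TreeA T} : TreeALe a x ↔ x = a ∨ x = top := by
  cases x <;> simp [TreeALe]

lemma le_a_iff {x : TreeA T} : TreeALe x a ↔ x = bot ∨ x = a := by
  cases x <;> simp [TreeALe]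

lemma relIsLUB_top_iff {A : Set (TreeA T)} :
    RelIsLUB TreeALe A top ↔ ∀ k, RelUpperBound TreeALe A k → k = top :=
  ⟨fun h k hk => top_le_iff.1 (h.2 k hk),
    fun h => ⟨fun x _ => by cases x <;> trivial, fun k hk => by rw [h k hk]; trivial⟩⟩

lemma relIsLUB_top_of_top_mem {A : Set (TreeA T)} (h : top ∈ A) : RelIsLUB TreeALe A top :=
  relIsLUB_top_iff.2 fun _ hk => top_le_iff.1 (hk _ h)

lemma relIsLUB_pair_a_node (σ : {l : List ℕ // l ∈ T}) :
    RelIsLUB TreeALe {a, node σ} top := by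
  refine relIsLUB_top_iff.2 fun k hk => ?_
  rcases a_le_iff.1 (hk a (by simp)) with rfl | rfl
  · exact (hk (node σ) (by simp)).elim
  · rfl

lemma relIsLUB_pair_node_node {σ τ : {l : List ℕ // l ∈ T}} (hστ : ¬ σ.1 <+: τ.1)
    (hτσ : ¬ τ.1 <+: σ.1) : RelIsLUB TreeALe {node σ, node τ} top := by
  refine relIsLUB_top_iff.2 fun k hk => ?_
  have hσ := hk (node σ) (by simp)
  have hτ := hk (node τ) (by simp)
  cases k with
  | top => rfl
  | bot | a => exact hσ.elim
  | node ρ => exact ((List.prefix_or_prefix_of_prefix hσ hτ).elim hστ hτσ).elim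

def nodes (A : Set (TreeA T)) : Set (List ℕ) := {l | ∃ h : l ∈ T, node ⟨l, h⟩ ∈ A}

lemma exists_finite_relIsLUB_top (hT : IsTree T) (hnp : ¬ ∃ f : ℕ → ℕ, IsPath T f)
    {A : Set (TreeA T)} (hA : RelIsLUB TreeALe A top) :
    ∃ A' ⊆ A, A'.Finite ∧ RelIsLUB TreeALe A' top := by
  by_contra! hfin
  have hpair : ∀ x ∈ A, ∀ y ∈ A, ¬ RelIsLUB TreeALe {x, y} top := fun x hx y hy =>
    hfin _ (Set.insert_subset hx (Set.singleton_subset_iff.2 hy)) (Set.toFinite _)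
  have htop : top ∉ A := fun h => hpair _ h _ h (relIsLUB_top_of_top_mem (by simp))
  have hub : ∀ k, RelUpperBound TreeALe A k → k = top := relIsLUB_top_iff.1 hA
  rcases (nodes A).eq_empty_or_nonempty with hS | ⟨l, hl⟩
  · refine absurd (hub a fun x hx => ?_) (by simp)
    cases x with
    | top => exact (htop hx).elim
    | node σ => exact (Set.eq_empty_iff_forall_notMem.1 hS σ.1 ⟨σ.2, hx⟩).elim
    | bot | a => trivial
  · have hchain : IsChain (· <+: ·) (nodes A) := fun l₁ hl₁ l₂ hl₂ _ => by
      by_contra! h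
      exact hpair _ hl₁.2 _ hl₂.2 (relIsLUB_pair_node_node h.1 h.2)
    obtain ⟨m, ⟨hmT, -⟩, hmax⟩ := exists_max_of_isChain hT hnp (fun _ hl => hl.1) hchain ⟨l, hl⟩
    refine absurd (hub (node ⟨m, hmT⟩) fun x hx => ?_) (by simp)
    cases x with
    | top => exact (htop hx).elim
    | a => exact (hpair _ hx _ hl.2 (relIsLUB_pair_a_node _)).elim
    | node σ => exact hmax σ.1 ⟨σ.2, hx⟩
    | bot => trivial

def pathNodes {f : ℕ → ℕ} (hf : IsPath T f) : Set (TreeA T) :=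
  Set.range fun k => node ⟨(List.range k).map f, hf k⟩

lemma relIsLUB_pathNodes {f : ℕ → ℕ} (hf : IsPath T f) :
    RelIsLUB TreeALe (pathNodes hf) top := by
  refine relIsLUB_top_iff.2 fun k hk => ?_
  have hroot := hk _ ⟨0, rfl⟩
  cases k with
  | top => rfl
  | bot | a => exact hroot.elim
  | node τ =>
    have := (hk _ ⟨τ.1.length + 1, rfl⟩ : List.map f (List.range (τ.1.length + 1)) <+: τ.1)
    simpa using this.length_le

lemma exists_node_upperBound_of_finite_subset_pathNodes {f : ℕ → ℕ} (hf : IsPath T f)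
    {A' : Set (TreeA T)} (hA' : A' ⊆ pathNodes hf) (hfin : A'.Finite) :
    ∃ σ, RelUpperBound TreeALe A' (node σ) := by
  have hinj : Function.Injective fun k => (node ⟨(List.range k).map f, hf k⟩ : TreeA T) :=
    fun m n h => by simpa using congrArg (fun σ => σ.1.length) (node.inj h)
  obtain ⟨K, hK⟩ := (hfin.preimage hinj.injOn).bddAbove
  refine ⟨⟨(List.range K).map f, hf K⟩, fun x hx => ?_⟩
  obtain ⟨k, rfl⟩ := hA' hx
  exact List.map_range_prefix_map_range f (hK hx)

end TreeA

open TreeA in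
theorem TreeA_a_compact_iff_no_path_general (T : Set (List ℕ)) (hT : IsTree T) :
    RelIsCompact (TreeALe (T := T)) TreeA.a ↔ ¬ ∃ f : ℕ → ℕ, IsPath T f := by
  constructor
  · rintro hc ⟨f, hf⟩
    obtain ⟨A', hA', hfin, j', hj', haj'⟩ := hc _ _ (relIsLUB_pathNodes hf) trivial
    obtain ⟨σ, hσ⟩ := exists_node_upperBound_of_finite_subset_pathNodes hf hA' hfin
    exact TreeA.le_trans haj' (hj'.2 _ hσ)
  · intro hnp A j hj haj
    rcases a_le_iff.1 haj with rfl | rfl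
    · have hA : A ⊆ {bot, a} := fun x hx => le_a_iff.1 (hj.1 x hx)
      exact ⟨A, subset_rfl, (Set.toFinite _).subset hA, a, hj, trivial⟩
    · obtain ⟨A', hA', hfin, hA'top⟩ := exists_finite_relIsLUB_top hT hnp hj
      exact ⟨A', hA', hfin, top, hA'top, trivial⟩

/-- In the complete lattice `T[a]`, the element `a` is compact if and only if the
tree `T` has no infinite path. -/
theorem TreeA_a_compact_iff_no_path (T : Set (List ℕ)) (hT : IsTree T) (hne : [] ∈ T) :
    RelIsCompact (TreeALe (T := T)) TreeA.a ↔ ¬ ∃ f : ℕ → ℕ, IsPath T f :=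
  TreeA_a_compact_iff_no_path_general T hT
end
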